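/- Fix n, t, s ∈ ℕ, Hermitian quaternion matrices Q, D_1, …, D_t, F_1, …, F_s ∈ ℍ^{(n+1)×(n+1)}, let E ∈ ℍ^{(n+1)×(n+1)} be the matrix with a 1 in the top-left entry and zeros elsewhere, and let λ ∈ ℝ. Then the following are equivalent: (1) there exist a Hermitian quaternion-PSD matrix G ∈ ℍ^{(n+1)×(n+1)} and reals m_1, …, m_t ≥ 0, ℓ_1, …, ℓ_s ∈ ℝ with Q − λ·E = G + Σ_{i=1}^t m_i·D_i + Σ_{j=1}^s ℓ_j·F_j; (2) there exist a real symmetric positive semidefinite 4(n+1)×4(n+1) matrix X and reals a_1, …, a_t ≥ 0, b_1, …, b_s ∈ ℝ with Λ(Q) − λ·Λ(E) = X + Σ_{i=1}^t a_i·Λ(D_i) + Σ_{j=1}^s b_j·Λ(F_j). Moreover, the correspondence is given by X = Λ(G), a_i = m_i, b_j = ℓ_j. -/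

import Mathlib

/-!
`Λ` is an injective `ℝ`-linear map with `Λ(Gᴴ) = Λ(G)ᵀ`, and if `x ∈ ℝ^{4N}` collects the real
coordinates of `v ∈ ℍ^N` then `xᵀ Λ(G) x = Re(v* G v)`. Hence `Λ(G)` is positive semidefinite
exactly when `G` is Hermitian and quaternion-PSD. A quaternion certificate is mapped to a real one
by linearity; conversely a real certificate `X` is `Λ(G)` for
`G = Q - λE - ∑ aᵢ Dᵢ - ∑ bⱼ Fⱼ`, which inherits Hermitian-ness and positivity from `X`.
-/

open Matrix

/-- The real `4N × 4N` block matrix `Λ(H)` associated with a quaternion matrix `H`,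
indexed by `Fin 4 × Fin N` with block order `R, I, J, K`. -/
noncomputable def lambdaMat {N : ℕ} (H : Matrix (Fin N) (Fin N) (Quaternion ℝ)) :
    Matrix (Fin 4 × Fin N) (Fin 4 × Fin N) ℝ := fun p q =>
  ![![(H p.2 q.2).re, -(H p.2 q.2).imI, -(H p.2 q.2).imJ, -(H p.2 q.2).imK],
    ![(H p.2 q.2).imI, (H p.2 q.2).re, -(H p.2 q.2).imK, (H p.2 q.2).imJ],
    ![(H p.2 q.2).imJ, (H p.2 q.2).imK, (H p.2 q.2).re, -(H p.2 q.2).imI],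
    ![(H p.2 q.2).imK, -(H p.2 q.2).imJ, (H p.2 q.2).imI, (H p.2 q.2).re]] p.1 q.1

theorem Quaternion.re_sum {ι : Type*} (s : Finset ι) (f : ι → Quaternion ℝ) :
    (∑ x ∈ s, f x).re = ∑ x ∈ s, (f x).re :=
  map_sum (QuaternionAlgebra.reₗ (-1) 0 (-1)) f s

section

variable {N : ℕ}

noncomputable def lambdaLinearMap :
    Matrix (Fin N) (Fin N) (Quaternion ℝ) →ₗ[ℝ] Matrix (Fin 4 × Fin N) (Fin 4 × Fin N) ℝ where
  toFun := lambdaMat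
  map_add' A B := by
    ext ⟨i, k⟩ ⟨j, l⟩
    fin_cases i <;> fin_cases j <;> simp [lambdaMat] <;> ring
  map_smul' r A := by
    ext ⟨i, k⟩ ⟨j, l⟩
    fin_cases i <;> fin_cases j <;> simp [lambdaMat]

@[simp]
theorem lambdaLinearMap_apply (A : Matrix (Fin N) (Fin N) (Quaternion ℝ)) :
    lambdaLinearMap A = lambdaMat A :=
  rfl

theorem lambdaMat_injective : Function.Injective (lambdaMat (N := N)) := by
  intro A B h
  ext k l
  · simpa [lambdaMat] using congr_fun (congr_fun h (0, k)) (0, l)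
  · simpa [lambdaMat] using congr_fun (congr_fun h (1, k)) (0, l)
  · simpa [lambdaMat] using congr_fun (congr_fun h (2, k)) (0, l)
  · simpa [lambdaMat] using congr_fun (congr_fun h (3, k)) (0, l)

theorem lambdaMat_conjTranspose (A : Matrix (Fin N) (Fin N) (Quaternion ℝ)) :
    lambdaMat Aᴴ = (lambdaMat A)ᵀ := by
  ext ⟨i, k⟩ ⟨j, l⟩
  fin_cases i <;> fin_cases j <;> simp [lambdaMat]

theorem isHermitian_lambdaMat_iff {A : Matrix (Fin N) (Fin N) (Quaternion ℝ)} :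
    (lambdaMat A).IsHermitian ↔ A.IsHermitian := by
  rw [IsHermitian, conjTranspose_eq_transpose_of_trivial, ← lambdaMat_conjTranspose,
    lambdaMat_injective.eq_iff, IsHermitian]

def realCoords (v : Fin N → Quaternion ℝ) : Fin 4 × Fin N → ℝ :=
  fun p => ![(v p.2).re, (v p.2).imI, (v p.2).imJ, (v p.2).imK] p.1

theorem realCoords_surjective : Function.Surjective (realCoords (N := N)) := by
  intro x
  refine ⟨fun k => ⟨x (0, k), x (1, k), x (2, k), x (3, k)⟩, ?_⟩
  ext ⟨i, k⟩
  fin_cases i <;> rfl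

theorem re_star_mul_mul_eq_sum (A : Matrix (Fin N) (Fin N) (Quaternion ℝ))
    (v : Fin N → Quaternion ℝ) (k l : Fin N) :
    (star (v k) * A k l * v l).re =
      ∑ i, ∑ j, realCoords v (i, k) * lambdaMat A (i, k) (j, l) * realCoords v (j, l) := by
  simp [Fin.sum_univ_four, realCoords, lambdaMat]
  ring

theorem dotProduct_lambdaMat_mulVec (A : Matrix (Fin N) (Fin N) (Quaternion ℝ))
    (v : Fin N → Quaternion ℝ) :
    realCoords v ⬝ᵥ lambdaMat A *ᵥ realCoords v = (∑ k, ∑ l, star (v k) * A k l * v l).re := by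
  simp only [Quaternion.re_sum, re_star_mul_mul_eq_sum, dotProduct, mulVec, Finset.mul_sum,
    Fintype.sum_prod_type, ← mul_assoc]
  exact Finset.sum_comm.trans <| Finset.sum_congr rfl fun _ _ =>
    (Finset.sum_congr rfl fun _ _ => Finset.sum_comm).trans Finset.sum_comm

theorem posSemidef_lambdaMat_iff {A : Matrix (Fin N) (Fin N) (Quaternion ℝ)} :
    (lambdaMat A).PosSemidef ↔
      A.IsHermitian ∧ ∀ v : Fin N → Quaternion ℝ, 0 ≤ (∑ k, ∑ l, star (v k) * A k l * v l).re := by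
  rw [posSemidef_iff_dotProduct_mulVec, isHermitian_lambdaMat_iff,
    realCoords_surjective.forall]
  simp only [star_trivial, dotProduct_lambdaMat_mulVec]

end

section Certificate

variable {N : ℕ} {ι κ : Type*} [Fintype ι] [Fintype κ]
  (Q E : Matrix (Fin N) (Fin N) (Quaternion ℝ)) (D : ι → Matrix (Fin N) (Fin N) (Quaternion ℝ))
  (F : κ → Matrix (Fin N) (Fin N) (Quaternion ℝ)) (lam : ℝ) (a : ι → ℝ) (b : κ → ℝ)

theorem lambdaMat_certificate_iff (G : Matrix (Fin N) (Fin N) (Quaternion ℝ)) :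
    Q - lam • E = G + ∑ i, a i • D i + ∑ j, b j • F j ↔
      lambdaMat Q - lam • lambdaMat E =
        lambdaMat G + ∑ i, a i • lambdaMat (D i) + ∑ j, b j • lambdaMat (F j) := by
  rw [← lambdaMat_injective.eq_iff]
  simp only [← lambdaLinearMap_apply, map_add, map_sub, map_sum, map_smul]

theorem exists_lambdaMat_eq_of_certificate
    {X : Matrix (Fin 4 × Fin N) (Fin 4 × Fin N) ℝ}
    (heq : lambdaMat Q - lam • lambdaMat E =
      X + ∑ i, a i • lambdaMat (D i) + ∑ j, b j • lambdaMat (F j)) :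
    ∃ G, X = lambdaMat G ∧ Q - lam • E = G + ∑ i, a i • D i + ∑ j, b j • F j := by
  set G := Q - lam • E - ∑ i, a i • D i - ∑ j, b j • F j
  have hG : Q - lam • E = G + ∑ i, a i • D i + ∑ j, b j • F j := by
    simp only [G]
    abel
  have hΛG := (lambdaMat_certificate_iff Q E D F lam a b G).1 hG
  exact ⟨G, add_right_cancel (add_right_cancel (heq.symm.trans hΛG)), hG⟩

end Certificate

theorem first_order_qsos_eq_rsos_general {n t s : ℕ}
    (Q : Matrix (Fin (n + 1)) (Fin (n + 1)) (Quaternion ℝ))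
    (D : Fin t → Matrix (Fin (n + 1)) (Fin (n + 1)) (Quaternion ℝ))
    (F : Fin s → Matrix (Fin (n + 1)) (Fin (n + 1)) (Quaternion ℝ))
    (E : Matrix (Fin (n + 1)) (Fin (n + 1)) (Quaternion ℝ))
    (lam : ℝ) :
    ((∃ (G : Matrix (Fin (n + 1)) (Fin (n + 1)) (Quaternion ℝ))
        (m : Fin t → ℝ) (ℓ : Fin s → ℝ),
        G = Gᴴ ∧
        (∀ v : Fin (n + 1) → Quaternion ℝ,
          0 ≤ (∑ k, ∑ l, star (v k) * G k l * v l).re) ∧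
        (∀ i, 0 ≤ m i) ∧
        Q - lam • E = G + ∑ i, m i • D i + ∑ j, ℓ j • F j) ↔
      (∃ (X : Matrix (Fin 4 × Fin (n + 1)) (Fin 4 × Fin (n + 1)) ℝ)
        (a : Fin t → ℝ) (b : Fin s → ℝ),
        X.PosSemidef ∧
        (∀ i, 0 ≤ a i) ∧
        lambdaMat Q - lam • lambdaMat E =
          X + ∑ i, a i • lambdaMat (D i) + ∑ j, b j • lambdaMat (F j))) ∧
    (∀ (G : Matrix (Fin (n + 1)) (Fin (n + 1)) (Quaternion ℝ))
        (m : Fin t → ℝ) (ℓ : Fin s → ℝ),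
        G = Gᴴ →
        (∀ v : Fin (n + 1) → Quaternion ℝ,
          0 ≤ (∑ k, ∑ l, star (v k) * G k l * v l).re) →
        (∀ i, 0 ≤ m i) →
        Q - lam • E = G + ∑ i, m i • D i + ∑ j, ℓ j • F j →
        ((lambdaMat G).PosSemidef ∧
          lambdaMat Q - lam • lambdaMat E =
            lambdaMat G + ∑ i, m i • lambdaMat (D i) + ∑ j, ℓ j • lambdaMat (F j))) ∧
    (∀ (X : Matrix (Fin 4 × Fin (n + 1)) (Fin 4 × Fin (n + 1)) ℝ)
        (a : Fin t → ℝ) (b : Fin s → ℝ),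
        X.PosSemidef →
        (∀ i, 0 ≤ a i) →
        lambdaMat Q - lam • lambdaMat E =
          X + ∑ i, a i • lambdaMat (D i) + ∑ j, b j • lambdaMat (F j) →
        ∃ G : Matrix (Fin (n + 1)) (Fin (n + 1)) (Quaternion ℝ),
          X = lambdaMat G ∧ G = Gᴴ ∧
          (∀ v : Fin (n + 1) → Quaternion ℝ,
            0 ≤ (∑ k, ∑ l, star (v k) * G k l * v l).re) ∧
          Q - lam • E = G + ∑ i, a i • D i + ∑ j, b j • F j) := by
  have hermitian_psd_iff (G : Matrix (Fin (n + 1)) (Fin (n + 1)) (Quaternion ℝ)) :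
      (lambdaMat G).PosSemidef ↔ G = Gᴴ ∧
        ∀ v : Fin (n + 1) → Quaternion ℝ, 0 ≤ (∑ k, ∑ l, star (v k) * G k l * v l).re := by
    rw [posSemidef_lambdaMat_iff, IsHermitian, eq_comm]
  have certificate_iff := lambdaMat_certificate_iff Q E D F lam
  refine ⟨⟨fun ⟨G, m, ℓ, hG, hpsd, hm, heq⟩ =>
      ⟨lambdaMat G, m, ℓ, (hermitian_psd_iff G).2 ⟨hG, hpsd⟩, hm, (certificate_iff m ℓ G).1 heq⟩,
    fun ⟨X, a, b, hX, ha, heq⟩ => ?_⟩,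
    fun G m ℓ hG hpsd _ heq => ⟨(hermitian_psd_iff G).2 ⟨hG, hpsd⟩, (certificate_iff m ℓ G).1 heq⟩,
    fun X a b hX _ heq => ?_⟩
  all_goals
    obtain ⟨G, hGX, hG⟩ := exists_lambdaMat_eq_of_certificate Q E D F lam a b heq
    obtain ⟨hG_herm, hG_psd⟩ := (hermitian_psd_iff G).1 (hGX ▸ hX)
  · exact ⟨G, a, b, hG_herm, hG_psd, ha, hG⟩
  · exact ⟨G, hGX, hG_herm, hG_psd, hG⟩

/-- Equivalence of the first-order QSOS relaxation of a quaternion QCQP with the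
first-order SOS relaxation of its real reformulation, the correspondence being
`X = Λ(G)`, `aᵢ = mᵢ`, `bⱼ = ℓⱼ`. -/
theorem first_order_qsos_eq_rsos {n t s : ℕ}
    (Q : Matrix (Fin (n + 1)) (Fin (n + 1)) (Quaternion ℝ))
    (D : Fin t → Matrix (Fin (n + 1)) (Fin (n + 1)) (Quaternion ℝ))
    (F : Fin s → Matrix (Fin (n + 1)) (Fin (n + 1)) (Quaternion ℝ))
    (hQ : Q = Qᴴ) (hD : ∀ i, D i = (D i)ᴴ) (hF : ∀ j, F j = (F j)ᴴ)
    (E : Matrix (Fin (n + 1)) (Fin (n + 1)) (Quaternion ℝ))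
    (hE : E = Matrix.single 0 0 1)
    (lam : ℝ) :
    ((∃ (G : Matrix (Fin (n + 1)) (Fin (n + 1)) (Quaternion ℝ))
        (m : Fin t → ℝ) (ℓ : Fin s → ℝ),
        G = Gᴴ ∧
        (∀ v : Fin (n + 1) → Quaternion ℝ,
          0 ≤ (∑ k, ∑ l, star (v k) * G k l * v l).re) ∧
        (∀ i, 0 ≤ m i) ∧
        Q - lam • E = G + ∑ i, m i • D i + ∑ j, ℓ j • F j) ↔
      (∃ (X : Matrix (Fin 4 × Fin (n + 1)) (Fin 4 × Fin (n + 1)) ℝ)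
        (a : Fin t → ℝ) (b : Fin s → ℝ),
        X.PosSemidef ∧
        (∀ i, 0 ≤ a i) ∧
        lambdaMat Q - lam • lambdaMat E =
          X + ∑ i, a i • lambdaMat (D i) + ∑ j, b j • lambdaMat (F j))) ∧
    (∀ (G : Matrix (Fin (n + 1)) (Fin (n + 1)) (Quaternion ℝ))
        (m : Fin t → ℝ) (ℓ : Fin s → ℝ),
        G = Gᴴ →
        (∀ v : Fin (n + 1) → Quaternion ℝ,
          0 ≤ (∑ k, ∑ l, star (v k) * G k l * v l).re) →
        (∀ i, 0 ≤ m i) →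
        Q - lam • E = G + ∑ i, m i • D i + ∑ j, ℓ j • F j →
        ((lambdaMat G).PosSemidef ∧
          lambdaMat Q - lam • lambdaMat E =
            lambdaMat G + ∑ i, m i • lambdaMat (D i) + ∑ j, ℓ j • lambdaMat (F j))) ∧
    (∀ (X : Matrix (Fin 4 × Fin (n + 1)) (Fin 4 × Fin (n + 1)) ℝ)
        (a : Fin t → ℝ) (b : Fin s → ℝ),
        X.PosSemidef →
        (∀ i, 0 ≤ a i) →
        lambdaMat Q - lam • lambdaMat E =
          X + ∑ i, a i • lambdaMat (D i) + ∑ j, b j • lambdaMat (F j) →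
        ∃ G : Matrix (Fin (n + 1)) (Fin (n + 1)) (Quaternion ℝ),
          X = lambdaMat G ∧ G = Gᴴ ∧
          (∀ v : Fin (n + 1) → Quaternion ℝ,
            0 ≤ (∑ k, ∑ l, star (v k) * G k l * v l).re) ∧
          Q - lam • E = G + ∑ i, a i • D i + ∑ j, b j • F j) :=
  first_order_qsos_eq_rsos_general Q D F E lam
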